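/- Let m ≥ 1. Let (V⁺, E) be a finite reflexive tournament and let H ⊆ V⁺ be a subset with at least two elements such that the induced subtournament on H is strongly connected and E u w holds for every u ∈ H and every w ∈ V⁺ \ H (so H is a non-trivial initial strongly connected component of (V⁺, E)). Let H₀ ⊆ H be a subset such that the induced subtournament on H₀ is endo-trivial, and let c : ZMod m → V⁺ be a Hamilton cycle of the subtournament induced on H₀. Suppose that for every y ∈ H there is a homomorphism g from Cyl*+_m to the induced subtournament on H with g (i, 0) = c i for every i : ZMod m and g p = y (i.e., Spill⁺_m computed inside H is all of H). Then for every y ∈ V⁺ there is a homomorphism g from Cyl*+_m to (V⁺, E) with g (i, 0) = c i for every i : ZMod m and g p = y (i.e., Spill⁺_m computed inside (V⁺, E) is all of V⁺). -/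
import Mathlib


/-- The edge relation of the gadget `Cyl*_m`, on vertex set `ZMod m × Fin m`:
loops, cycle edges, red edges and green edges. -/
def CylE (m : ℕ) : ZMod m × Fin m → ZMod m × Fin m → Prop := fun a b =>
  a = b ∨
  (b.1 = a.1 + 1 ∧ b.2 = a.2) ∨
  (a.1 = b.1 ∧ (a.2 : ℕ) + 1 = (b.2 : ℕ)) ∨
  (b.1 = a.1 + 1 ∧ (b.2 : ℕ) + 1 = (a.2 : ℕ))

/-- The edge relation of the gadget `Cyl*+_m`: `Cyl*_m` extended by one extra vertex
`p = none`, with a loop at `p` and an edge from the top-copy vertex `(0, m - 1)` to `p`. -/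
def CylPlusE (m : ℕ) : Option (ZMod m × Fin m) → Option (ZMod m × Fin m) → Prop :=
  fun a b =>
    match a, b with
    | some a, some b => CylE m a b
    | none, none => True
    | some a, none => a.1 = 0 ∧ (a.2 : ℕ) = m - 1
    | none, some _ => False

/-- If `H` is a non-trivial initial strongly connected component of a finite
reflexive tournament `(V⁺, E)`, `H₀ ⊆ H` induces an endo-trivial subtournament with Hamilton
cycle `c`, and `Spill⁺_m` computed inside `H` is all of `H`, then `Spill⁺_m` computed inside
`(V⁺, E)` is all of `V⁺`. -/
theorem stmt15 (m : ℕ) (hm : 1 ≤ m)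
    {V : Type*} [Fintype V] (E : V → V → Prop)
    (hrefl : ∀ v, E v v)
    (htour : ∀ u v : V, u ≠ v → Xor' (E u v) (E v u))
    (H H₀ : Set V) (hH0H : H₀ ⊆ H)
    (hHbig : ∃ u ∈ H, ∃ v ∈ H, u ≠ v)
    (hHsc : ∀ u v : H, Relation.ReflTransGen (fun a b : H => E a.1 b.1) u v)
    (hHinit : ∀ u ∈ H, ∀ w : V, w ∉ H → E u w)
    (hH0endo : ∀ e : H₀ → H₀,
      (∀ u v : H₀, E u.1 v.1 → E (e u).1 (e v).1) →
      ((∃ g : H₀ → H₀, Function.LeftInverse g e ∧ Function.RightInverse g e ∧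
          (∀ u v : H₀, E u.1 v.1 → E (g u).1 (g v).1)) ∨
        ∃ z : H₀, ∀ u : H₀, e u = z))
    (c : ZMod m → V) (hcinj : Function.Injective c) (hcrange : Set.range c = H₀)
    (hccyc : ∀ i : ZMod m, E (c i) (c (i + 1)))
    (hspillH : ∀ y ∈ H, ∃ g : Option (ZMod m × Fin m) → V,
      (∀ w, g w ∈ H) ∧
      (∀ a b, CylPlusE m a b → E (g a) (g b)) ∧
      (∀ i : ZMod m, g (some (i, ⟨0, by omega⟩)) = c i) ∧
      g none = y) :
    ∀ y : V, ∃ g : Option (ZMod m × Fin m) → V,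
      (∀ a b, CylPlusE m a b → E (g a) (g b)) ∧
      (∀ i : ZMod m, g (some (i, ⟨0, by omega⟩)) = c i) ∧
      g none = y := by
  intro y
  by_cases hy : y ∈ H
  · obtain ⟨g, _, hhom, hbot, htop⟩ := hspillH y hy
    exact ⟨g, hhom, hbot, htop⟩
  · have hc0 : c 0 ∈ H := hH0H (hcrange ▸ Set.mem_range_self 0)
    obtain ⟨g, hmem, hhom, hbot, -⟩ := hspillH (c 0) hc0
    refine ⟨fun o => Option.elim o y (fun a => g (some a)), ?_, hbot, rfl⟩
    intro a b hab
    match a, b with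
    | some a, some b => exact hhom _ _ hab
    | some a, none => exact hHinit _ (hmem (some a)) y hy
    | none, none => exact hrefl y
    | none, some b => exact hab.elim
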